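/- Let a, q ∈ ℝ and let J be an interval on which a + 2q·cos(2t) > 0. Let x, y : J → ℝ be twice differentiable and satisfy the Mathieu–Kapitza system x″(t) + [2q sin(2t)/(a + 2q cos(2t))]·x′(t) + (a + 2q cos(2t))·(x(t) + y(t)) = 0 and y″(t) + [2q sin(2t)/(a + 2q cos(2t))]·y′(t) − (a + 2q cos(2t))·(x(t) − y(t)) = 0 on J. Then 𝓘₁(t) = (1/2)·[(x′(t)² − y′(t)²)/(a + 2q cos(2t)) + x(t)² − y(t)²] + x(t)y(t) is constant on J. -/

import Mathlib

/-!
With `w = ω² = a + 2q cos 2t` the damping coefficient `2q sin 2t / w` equals `-w'/(2w)`, so the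
system reads `x'' = (w'/(2w)) x' - w (x + y)`, `y'' = (w'/(2w)) y' + w (x - y)`. For any nonvanishing
modulation `w`, differentiating `𝓘₁` and substituting these equations makes the `w'` terms cancel
against the derivative of `1/w`, leaving `-x'(x + y) - y'(x - y) + (x x' - y y') + (x' y + x y') = 0`.
-/

open Real

theorem Set.OrdConnected.eq_of_hasDerivAt_eq_zero {J : Set ℝ} (hJ : J.OrdConnected) {f : ℝ → ℝ}
    (hf : ∀ t ∈ J, HasDerivAt f 0 t) {t₁ t₂ : ℝ} (h₁ : t₁ ∈ J) (h₂ : t₂ ∈ J) : f t₁ = f t₂ := by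
  have h := hJ.convex.norm_image_sub_le_of_norm_hasDerivWithin_le (f' := fun _ => (0 : ℝ))
    (C := 0) (fun s hs => (hf s hs).hasDerivWithinAt) (fun _ _ => by simp) h₂ h₁
  simpa only [zero_mul, norm_le_zero_iff, sub_eq_zero] using h

/-- The quantity `𝓘₁` for the Kapitza system with squared frequency `w = ω²`. -/
noncomputable def kapitzaFirstIntegral (w x x' y y' : ℝ → ℝ) (t : ℝ) : ℝ :=
  (1 / 2) * ((x' t ^ 2 - y' t ^ 2) / w t + x t ^ 2 - y t ^ 2) + x t * y t

theorem hasDerivAt_kapitzaFirstIntegral {w x x' y y' : ℝ → ℝ} {w' x'' y'' t : ℝ}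
    (hw : HasDerivAt w w' t) (hw0 : w t ≠ 0)
    (hx : HasDerivAt x (x' t) t) (hx' : HasDerivAt x' x'' t)
    (hy : HasDerivAt y (y' t) t) (hy' : HasDerivAt y' y'' t)
    (hode1 : x'' = w' / (2 * w t) * x' t - w t * (x t + y t))
    (hode2 : y'' = w' / (2 * w t) * y' t + w t * (x t - y t)) :
    HasDerivAt (kapitzaFirstIntegral w x x' y y') 0 t := by
  have hkin : HasDerivAt (fun s => x' s ^ 2 - y' s ^ 2) (2 * x' t * x'' - 2 * y' t * y'') t :=
    ((hx'.pow 2).sub (hy'.pow 2)).congr_deriv (by ring)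
  have hI := (((hkin.div hw hw0).add (hx.pow 2)).sub (hy.pow 2)).const_mul (1 / 2 : ℝ)
    |>.add (hx.mul hy)
  refine hI.congr_deriv ?_
  rw [hode1, hode2]
  field_simp
  ring

theorem hasDerivAt_mathieu_modulation (a q t : ℝ) :
    HasDerivAt (fun s => a + 2 * q * cos (2 * s)) (-(4 * q * sin (2 * t))) t := by
  have h2t : HasDerivAt (fun s : ℝ => 2 * s) 2 t := by
    simpa using (hasDerivAt_id t).const_mul 2
  exact ((((hasDerivAt_cos (2 * t)).comp t h2t).const_mul (2 * q)).const_add a).congr_deriv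
    (by ring)

/-- Along any solution of the Mathieu–Kapitza system on an interval J where
a + 2q cos 2t > 0, the quantity
𝓘₁ = (1/2)[(x′² − y′²)/(a + 2q cos 2t) + x² − y²] + xy is constant. -/
theorem mathieu_kapitza_first_integral_I1
    (a q : ℝ) (J : Set ℝ) (hJ : J.OrdConnected)
    (hpos : ∀ t ∈ J, 0 < a + 2 * q * Real.cos (2 * t))
    (x x' x'' y y' y'' : ℝ → ℝ)
    (hx : ∀ t ∈ J, HasDerivAt x (x' t) t)
    (hx' : ∀ t ∈ J, HasDerivAt x' (x'' t) t)
    (hy : ∀ t ∈ J, HasDerivAt y (y' t) t)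
    (hy' : ∀ t ∈ J, HasDerivAt y' (y'' t) t)
    (hode1 : ∀ t ∈ J, x'' t
      + (2 * q * Real.sin (2 * t) / (a + 2 * q * Real.cos (2 * t))) * x' t
      + (a + 2 * q * Real.cos (2 * t)) * (x t + y t) = 0)
    (hode2 : ∀ t ∈ J, y'' t
      + (2 * q * Real.sin (2 * t) / (a + 2 * q * Real.cos (2 * t))) * y' t
      - (a + 2 * q * Real.cos (2 * t)) * (x t - y t) = 0) :
    ∀ t₁ ∈ J, ∀ t₂ ∈ J,
      (1 / 2) * (((x' t₁) ^ 2 - (y' t₁) ^ 2) / (a + 2 * q * Real.cos (2 * t₁))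
        + (x t₁) ^ 2 - (y t₁) ^ 2) + x t₁ * y t₁
      = (1 / 2) * (((x' t₂) ^ 2 - (y' t₂) ^ 2) / (a + 2 * q * Real.cos (2 * t₂))
        + (x t₂) ^ 2 - (y t₂) ^ 2) + x t₂ * y t₂ := by
  intro t₁ h₁ t₂ h₂
  refine hJ.eq_of_hasDerivAt_eq_zero (f := kapitzaFirstIntegral (fun s => a + 2 * q * cos (2 * s))
    x x' y y') (fun t ht => ?_) h₁ h₂
  have hdamp : -(4 * q * sin (2 * t)) / (2 * (a + 2 * q * cos (2 * t)))
      = -(2 * q * sin (2 * t) / (a + 2 * q * cos (2 * t))) := by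
    field_simp [(hpos t ht).ne']
    ring
  refine hasDerivAt_kapitzaFirstIntegral (hasDerivAt_mathieu_modulation a q t) (hpos t ht).ne'
    (hx t ht) (hx' t ht) (hy t ht) (hy' t ht) ?_ ?_
  · rw [hdamp]; linarith [hode1 t ht]
  · rw [hdamp]; linarith [hode2 t ht]
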